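/- Let b = 5·2^n with n ≥ 2. Then the least L ≥ 0 such that both coordinates of K^L((9, 1)) are divisible by 2^n equals 2n; moreover, K^{2n}((9, 1)) = (2·2^n, 0) if n is even, and K^{2n}((9, 1)) = (4·2^n, 2·2^n) if n is odd. -/

import Mathlib

/-!
With `c = 2^n` and `b = 5c`, the orbit of `(9, 1)` is `(b - 2^t, b - 9·2^t)` for `1 ≤ t < n`
(type (a), each step doubling the offsets from `b`). At `t = n - 1` this is `(9·2^(n-1), 2^(n-1))`,
whose coordinates sum to `b`, so the type (b) step gives `(4c + 1, 4c - 1)`. From there the pairs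
are type (a) again and alternate between `3c ± 2^k` (odd `k`) and `c ± 2^k` (even `k`) at step
`n + k`, ending at `k = n` in `(2c, 0)` or `(4c, 2c)`. Before step `2n` the first coordinate is
odd or congruent to `±2^t` modulo `2^n` with `t < n`, so it is not divisible by `2^n`.
-/

/-- The four base-`b` digits of `x` (viewed as a 4-digit string with leading
zeros allowed), sorted in decreasing order. -/
def sortedDigits (b x : ℕ) : List ℕ :=
  List.insertionSort (· ≥ ·) [x % b, x / b % b, x / b ^ 2 % b, x / b ^ 3 % b]

/-- The 4-digit base-`b` Kaprekar function `K_b(x) = D - A`. -/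
def Kap (b x : ℕ) : ℕ :=
  let l := sortedDigits b x
  (l[0]! * b ^ 3 + l[1]! * b ^ 2 + l[2]! * b + l[3]!) -
    (l[3]! * b ^ 3 + l[2]! * b ^ 2 + l[1]! * b + l[0]!)

/-- The difference pair `(a₃ - a₀, a₂ - a₁)` of a 4-digit base-`b` input. -/
def diffPair (b x : ℕ) : ℕ × ℕ :=
  let l := sortedDigits b x
  (l[0]! - l[3]!, l[1]! - l[2]!)

/-- `S_b`: the set of 4-digit base-`b` inputs whose sequence of Kaprekar
iterates is eventually constant and nonzero. -/
def KapSet (b : ℕ) : Set ℕ :=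
  {x | x < b ^ 4 ∧
    ∃ t, (∀ s, t ≤ s → (Kap b)^[s] x = (Kap b)^[t] x) ∧ (Kap b)^[t] x ≠ 0}

/-- Arrange the two coordinates of a pair in decreasing order. -/
def sort2 (p : ℕ × ℕ) : ℕ × ℕ := (max p.1 p.2, min p.1 p.2)

/-- A base-`b` difference pair: `b - 1 ≥ d ≥ d' ≥ 0`. -/
def IsDiffPair (b : ℕ) (p : ℕ × ℕ) : Prop := p.2 ≤ p.1 ∧ p.1 ≤ b - 1

/-- The Kaprekar map on base-`b` difference pairs. -/
def Kpair (b : ℕ) (p : ℕ × ℕ) : ℕ × ℕ :=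
  if p.1 = 0 ∧ p.2 = 0 then (0, 0)
  else if p.2 = 0 then
    -- type (c)
    sort2 (p.1 - 1, b - p.1)
  else if p.1 = p.2 ∨ p.1 + p.2 = b then
    -- type (b)
    sort2 ((2 * (p.1 : ℤ) - ((b : ℤ) - 1)).natAbs,
           (2 * (p.1 : ℤ) - ((b : ℤ) + 1)).natAbs)
  else
    -- type (a)
    sort2 ((2 * (p.1 : ℤ) - (b : ℤ)).natAbs, (2 * (p.2 : ℤ) - (b : ℤ)).natAbs)


lemma Kpair_of_typeA {b d d' : ℕ} (hd' : d' ≠ 0) (hne : d ≠ d') (hsum : d + d' ≠ b) :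
    Kpair b (d, d') = sort2 ((2 * (d : ℤ) - b).natAbs, (2 * (d' : ℤ) - b).natAbs) := by
  simp [Kpair, hd', hne, hsum]

lemma Kpair_of_add_eq {b d d' : ℕ} (hd' : d' ≠ 0) (hsum : d + d' = b) :
    Kpair b (d, d') =
      sort2 ((2 * (d : ℤ) - ((b : ℤ) - 1)).natAbs, (2 * (d : ℤ) - ((b : ℤ) + 1)).natAbs) := by
  simp [Kpair, hd', hsum]

lemma Kpair_nine_one {b : ℕ} (hb : 18 < b) : Kpair b (9, 1) = (b - 2, b - 18) := by
  rw [Kpair_of_typeA (by omega) (by omega) (by omega)]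
  simp only [sort2, Prod.mk.injEq]
  omega

lemma Kpair_sub_sub_nine_mul {b x : ℕ} (hx : 1 ≤ x) (h : 18 * x < b) :
    Kpair b (b - x, b - 9 * x) = (b - 2 * x, b - 18 * x) := by
  rw [Kpair_of_typeA (by omega) (by omega) (by omega)]
  simp only [sort2, Prod.mk.injEq]
  omega

lemma Kpair_nine_mul {x : ℕ} (hx : 1 ≤ x) :
    Kpair (10 * x) (9 * x, x) = (8 * x + 1, 8 * x - 1) := by
  rw [Kpair_of_add_eq (by omega) (by omega)]
  simp only [sort2, Prod.mk.injEq]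
  omega

lemma Kpair_four_mul_add_one {c : ℕ} (hc : 1 ≤ c) :
    Kpair (5 * c) (4 * c + 1, 4 * c - 1) = (3 * c + 2, 3 * c - 2) := by
  rw [Kpair_of_typeA (by omega) (by omega) (by omega)]
  simp only [sort2, Prod.mk.injEq]
  omega

lemma iterate_Kpair_nine_one {b t : ℕ} (ht : 1 ≤ t) (hb : 9 * 2 ^ t < b) :
    (Kpair b)^[t] (9, 1) = (b - 2 ^ t, b - 9 * 2 ^ t) := by
  induction t, ht using Nat.le_induction with
  | base => simpa using Kpair_nine_one (by omega)
  | succ t _ ih =>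
    rw [pow_succ] at hb ⊢
    rw [Function.iterate_succ_apply', ih (by omega),
      Kpair_sub_sub_nine_mul Nat.one_le_two_pow (by omega)]
    ext <;> simp only <;> ring_nf

def oscillatingPair (c k : ℕ) : ℕ × ℕ :=
  if Odd k then (3 * c + 2 ^ k, 3 * c - 2 ^ k) else (c + 2 ^ k, c - 2 ^ k)

lemma Kpair_oscillatingPair {c k : ℕ} (h : 2 ^ (k + 1) ≤ c) :
    Kpair (5 * c) (oscillatingPair c k) = oscillatingPair c (k + 1) := by
  have hk : 1 ≤ 2 ^ k := Nat.one_le_two_pow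
  rw [pow_succ] at h
  rcases Nat.even_or_odd k with hev | hodd
  · have hodd' : Odd (k + 1) := hev.add_one
    simp only [oscillatingPair, Nat.not_odd_iff_even.mpr hev, hodd', if_true, if_false, pow_succ]
    rw [Kpair_of_typeA (by omega) (by omega) (by omega)]
    simp only [sort2, Prod.mk.injEq]
    omega
  · have hev' : ¬Odd (k + 1) := Nat.not_odd_iff_even.mpr hodd.add_one
    simp only [oscillatingPair, hodd, hev', if_true, if_false, pow_succ]
    rw [Kpair_of_typeA (by omega) (by omega) (by omega)]
    simp only [sort2, Prod.mk.injEq]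
    omega

lemma iterate_Kpair_oscillatingPair {c i k : ℕ} (h : 2 ^ (i + k) ≤ c) :
    (Kpair (5 * c))^[k] (oscillatingPair c i) = oscillatingPair c (i + k) := by
  induction k generalizing i with
  | zero => rfl
  | succ k ih =>
    have hi : 2 ^ (i + 1) ≤ c := (Nat.pow_le_pow_right two_pos (by omega)).trans h
    rw [Function.iterate_succ_apply, Kpair_oscillatingPair hi, ih (by rwa [add_right_comm]),
      add_right_comm, add_assoc]

lemma iterate_Kpair_nine_one_self {n : ℕ} (hn : 2 ≤ n) :
    (Kpair (5 * 2 ^ n))^[n] (9, 1) = (4 * 2 ^ n + 1, 4 * 2 ^ n - 1) := by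
  obtain ⟨m, rfl⟩ : ∃ m, n = m + 1 := ⟨n - 1, by omega⟩
  have hm : 1 ≤ 2 ^ m := Nat.one_le_two_pow
  have hb : 5 * 2 ^ (m + 1) = 10 * 2 ^ m := by ring
  have hpred : (Kpair (5 * 2 ^ (m + 1)))^[m] (9, 1) = (9 * 2 ^ m, 2 ^ m) := by
    rw [iterate_Kpair_nine_one (by omega) (by omega), hb]
    ext <;> simp only <;> omega
  rw [Function.iterate_succ_apply', hpred, hb, Kpair_nine_mul hm, pow_succ]
  ext <;> simp only <;> omega

lemma iterate_Kpair_nine_one_add {n k : ℕ} (hn : 2 ≤ n) (hk : 1 ≤ k) (hkn : k ≤ n) :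
    (Kpair (5 * 2 ^ n))^[n + k] (9, 1) = oscillatingPair (2 ^ n) k := by
  have hone : Kpair (5 * 2 ^ n) (4 * 2 ^ n + 1, 4 * 2 ^ n - 1) = oscillatingPair (2 ^ n) 1 := by
    rw [Kpair_four_mul_add_one Nat.one_le_two_pow]
    simp [oscillatingPair]
  rw [show n + k = (k - 1) + (1 + n) by omega, Function.iterate_add_apply,
    Function.iterate_add_apply, iterate_Kpair_nine_one_self hn, Function.iterate_one, hone,
    iterate_Kpair_oscillatingPair (Nat.pow_le_pow_right two_pos (by omega))]
  congr 1
  omega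

lemma two_pow_dvd_add_two_pow_iff {n k a : ℕ} (ha : 2 ^ n ∣ a) : 2 ^ n ∣ a + 2 ^ k ↔ n ≤ k :=
  (Nat.dvd_add_right ha).trans (Nat.pow_dvd_pow_iff_le_right one_lt_two)

lemma not_two_pow_dvd_fst_iterate_Kpair_nine_one {n L : ℕ} (hn : 2 ≤ n) (hL : L < 2 * n) :
    ¬ 2 ^ n ∣ ((Kpair (5 * 2 ^ n))^[L] (9, 1)).1 := by
  intro h
  rcases Nat.lt_trichotomy L n with hlt | rfl | hgt
  · rcases Nat.eq_zero_or_pos L with rfl | hL0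
    · have : 2 ∣ 9 := (dvd_pow_self 2 (by omega : n ≠ 0)).trans h
      omega
    · have hpow : 2 ^ (L + 1) ≤ 2 ^ n := Nat.pow_le_pow_right two_pos hlt
      rw [pow_succ] at hpow
      rw [iterate_Kpair_nine_one hL0 (by omega)] at h
      have hb : 2 ^ n ∣ (5 * 2 ^ n - 2 ^ L) + 2 ^ L := by
        rw [Nat.sub_add_cancel (by omega)]
        exact dvd_mul_left _ _
      have := (two_pow_dvd_add_two_pow_iff h).mp hb
      omega
  · rw [iterate_Kpair_nine_one_self hn, ← pow_zero 2] at h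
    have := (two_pow_dvd_add_two_pow_iff (dvd_mul_left _ _)).mp h
    omega
  · obtain ⟨k, rfl⟩ : ∃ k, L = n + k := ⟨L - n, by omega⟩
    rw [iterate_Kpair_nine_one_add hn (by omega) (by omega), oscillatingPair] at h
    split_ifs at h
    · have := (two_pow_dvd_add_two_pow_iff (dvd_mul_left _ _)).mp h
      omega
    · have := (two_pow_dvd_add_two_pow_iff dvd_rfl).mp h
      omega

/-- for `b = 5·2^n`, `n ≥ 2`, the pair `(9, 1)` first reaches a
pair with both coordinates divisible by `2^n` after exactly `2n` steps, landing
on `(2·2^n, 0)` for even `n` and `(4·2^n, 2·2^n)` for odd `n`. -/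
theorem kaprekar_nine_one (n b : ℕ) (hn : 2 ≤ n) (hb : b = 5 * 2 ^ n) :
    IsLeast {L : ℕ | 2 ^ n ∣ ((Kpair b)^[L] (9, 1)).1 ∧
                     2 ^ n ∣ ((Kpair b)^[L] (9, 1)).2} (2 * n) ∧
    (Even n → (Kpair b)^[2 * n] (9, 1) = (2 * 2 ^ n, 0)) ∧
    (Odd n → (Kpair b)^[2 * n] (9, 1) = (4 * 2 ^ n, 2 * 2 ^ n)) := by
  subst hb
  have hend := iterate_Kpair_nine_one_add hn (by omega) le_rfl
  rw [← two_mul, oscillatingPair] at hend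
  have heven : Even n → (Kpair (5 * 2 ^ n))^[2 * n] (9, 1) = (2 * 2 ^ n, 0) := fun he => by
    rw [hend, if_neg (Nat.not_odd_iff_even.mpr he), two_mul, Nat.sub_self]
  have hodd : Odd n → (Kpair (5 * 2 ^ n))^[2 * n] (9, 1) = (4 * 2 ^ n, 2 * 2 ^ n) := fun ho => by
    rw [hend, if_pos ho]
    ext <;> simp only <;> omega
  refine ⟨⟨?_, fun L hL => ?_⟩, heven, hodd⟩
  · rcases Nat.even_or_odd n with he | ho
    · simp [heven he]
    · simp [hodd ho, Dvd.intro_left]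
  · by_contra! hlt
    exact not_two_pow_dvd_fst_iterate_Kpair_nine_one hn hlt hL.1
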